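/- For every rooted tree t with pairwise distinct leaf labels, every set S of labels, and every vertex v of t, the vertex v is complete with respect to S if and only if L(v) ⊆ S; that is, counter_S(v) = |L(v)| if and only if every leaf label in the subtree rooted at v belongs to S. -/

import Mathlib

inductive RTree (α : Type*) where
  | leaf (a : α)
  | node (children : List (RTree α))

namespace RTree

variable {α : Type*} [DecidableEq α]

/-- The list of leaf labels of a tree. -/
def leafList : RTree α → List α
  | leaf a => [a]
  | node cs => (cs.attach.map fun ⟨w, _⟩ => leafList w).flatten
decreasing_by have := List.sizeOf_lt_of_mem ‹_›; simp only [node.sizeOf_spec]; omega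

/-- `L v` is the finite set of labels of leaves in the subtree rooted at `v`. -/
def L (v : RTree α) : Finset α := (leafList v).toFinset

/-- The counter function. -/
def counter (S : Finset α) : RTree α → ℕ
  | leaf a => if a ∈ S then 1 else 0
  | node cs =>
      (cs.attach.map fun ⟨w, _⟩ =>
        if counter S w = (L w).card then counter S w else 0).sum
decreasing_by have := List.sizeOf_lt_of_mem ‹_›; simp only [node.sizeOf_spec]; omega

/-- `IsVertex v t` means that `v` is a vertex (subtree) of `t`. -/
inductive IsVertex : RTree α → RTree α → Prop
  | refl (t : RTree α) : IsVertex t t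
  | child {v w : RTree α} {cs : List (RTree α)} : w ∈ cs → IsVertex v w → IsVertex v (node cs)

/-- The list of all vertices (subtrees) of a tree. -/
def vertexList : RTree α → List (RTree α)
  | leaf a => [leaf a]
  | node cs => node cs :: (cs.attach.map fun ⟨w, _⟩ => vertexList w).flatten
decreasing_by have := List.sizeOf_lt_of_mem ‹_›; simp only [node.sizeOf_spec]; omega

/-! Dropping an incomplete child only loses mass, so by induction the counter never exceeds the
number of leaves labelled in `S`. With distinct labels `|L v|` is the number of leaves of `v`, so
equality forces every leaf into `S`. Conversely, if `L v ⊆ S` then every descendant of `v` is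
complete and the counter adds up all the leaves. -/

omit [DecidableEq α] in
@[elab_as_elim]
theorem induction_mem {motive : RTree α → Prop} (leaf : ∀ a, motive (leaf a))
    (node : ∀ cs, (∀ w ∈ cs, motive w) → motive (node cs)) (t : RTree α) : motive t :=
  match t with
  | .leaf a => leaf a
  | .node cs => node cs fun w _ => induction_mem leaf node w
decreasing_by have := List.sizeOf_lt_of_mem ‹_›; simp only [RTree.node.sizeOf_spec]; omega

omit [DecidableEq α] in
theorem leafList_node (cs : List (RTree α)) :
    leafList (node cs) = (cs.map leafList).flatten := by
  rw [leafList, List.attach_map_val (f := leafList)]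

omit [DecidableEq α] in
theorem IsVertex.leafList_sublist {v t : RTree α} (h : IsVertex v t) :
    (leafList v).Sublist (leafList t) := by
  induction h with
  | refl => exact List.Sublist.refl _
  | child hw _ ih =>
    rw [leafList_node]
    exact ih.trans (List.sublist_flatten_of_mem (List.mem_map_of_mem hw))

theorem mem_L {v : RTree α} {a : α} : a ∈ L v ↔ a ∈ leafList v :=
  List.mem_toFinset

theorem card_L {v : RTree α} (h : (leafList v).Nodup) : (L v).card = (leafList v).length :=
  List.toFinset_card_of_nodup h

theorem counter_node (S : Finset α) (cs : List (RTree α)) :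
    counter S (node cs) =
      (cs.map fun w => if counter S w = (L w).card then counter S w else 0).sum := by
  rw [counter, List.attach_map_val (f := fun w => if counter S w = (L w).card then _ else 0)]

theorem counter_le_countP (S : Finset α) (v : RTree α) :
    counter S v ≤ (leafList v).countP (· ∈ S) := by
  induction v using induction_mem with
  | leaf a => by_cases h : a ∈ S <;> simp [counter, leafList, h]
  | node cs ih =>
    rw [counter_node, leafList_node, List.countP_flatten, List.map_map]
    refine List.sum_le_sum fun w hw => ?_
    split_ifs
    · exact ih w hw
    · exact Nat.zero_le _

theorem counter_eq_length_of_subset (S : Finset α) (v : RTree α) (hnd : (leafList v).Nodup)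
    (hS : L v ⊆ S) : counter S v = (leafList v).length := by
  induction v using induction_mem with
  | leaf a =>
    have ha : a ∈ S := hS (mem_L.2 (by simp [leafList]))
    simp [counter, leafList, ha]
  | node cs ih =>
    rw [leafList_node] at hnd
    rw [counter_node, leafList_node, List.length_flatten, List.map_map]
    refine congrArg List.sum (List.map_congr_left fun w hw => ?_)
    have hndw : (leafList w).Nodup :=
      (List.nodup_flatten.1 hnd).1 _ (List.mem_map_of_mem hw)
    have hSw : L w ⊆ S := fun a ha => hS <| mem_L.2 <| by
      rw [leafList_node]
      exact List.mem_flatten_of_mem (List.mem_map_of_mem hw) (mem_L.1 ha)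
    rw [ih w hw hndw hSw, card_L hndw, if_pos rfl, Function.comp_apply]

/-- a vertex `v` is complete with respect to `S` iff `L(v) ⊆ S`;
i.e. `counter_S(v) = |L(v)|` iff every leaf label in the subtree rooted at `v` is in `S`. -/
theorem counter_eq_card_iff_subset (t : RTree α) (hnd : t.leafList.Nodup)
    (S : Finset α) (v : RTree α) (hv : IsVertex v t) :
    counter S v = (L v).card ↔ L v ⊆ S := by
  have hndv : (leafList v).Nodup := hv.leafList_sublist.nodup hnd
  rw [card_L hndv]
  refine ⟨fun h a ha => ?_, counter_eq_length_of_subset S v hndv⟩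
  have hall : (leafList v).countP (· ∈ S) = (leafList v).length :=
    le_antisymm List.countP_le_length (h ▸ counter_le_countP S v)
  simpa using List.countP_eq_length.1 hall a (mem_L.1 ha)

end RTree
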